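/- With I defined as the product (a_{q_1,q_2,q_4}² − a_{q_1,q_3,q_4}²)(a_{q_1,q_2,q_3}² − a_{q_1,q_3,q_4}²)(a_{q_1,q_2,q_3}² − a_{q_1,q_2,q_4}²)(a_{q_1,q_2,q_3} − a_{q_1,q_2,q_4} + 2a_{q_1,q_3,q_4})(a_{q_1,q_2,q_3} − 2a_{q_1,q_2,q_4} + a_{q_1,q_3,q_4})(2a_{q_1,q_2,q_3} − a_{q_1,q_2,q_4} + a_{q_1,q_3,q_4}), where a_{x,y,z} = det(x − z, y − z), the function I is invariant under every permutation of its four arguments: I(q_{π(1)}, q_{π(2)}, q_{π(3)}, q_{π(4)}) = I(q_1, q_2, q_3, q_4) for all π ∈ S_4. -/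
import Mathlib


/-- The signed area of the parallelogram spanned by `x - z` and `y - z` in `ℝ²`. -/
def sarea (x y z : Fin 2 → ℝ) : ℝ :=
  (x 0 - z 0) * (y 1 - z 1) - (x 1 - z 1) * (y 0 - z 0)

/-- The `SE(2) × S₄`-invariant `I` built from signed areas. -/
def Ifun (q₁ q₂ q₃ q₄ : Fin 2 → ℝ) : ℝ :=
  (sarea q₁ q₂ q₄ ^ 2 - sarea q₁ q₃ q₄ ^ 2) *
  (sarea q₁ q₂ q₃ ^ 2 - sarea q₁ q₃ q₄ ^ 2) *
  (sarea q₁ q₂ q₃ ^ 2 - sarea q₁ q₂ q₄ ^ 2) *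
  (sarea q₁ q₂ q₃ - sarea q₁ q₂ q₄ + 2 * sarea q₁ q₃ q₄) *
  (sarea q₁ q₂ q₃ - 2 * sarea q₁ q₂ q₄ + sarea q₁ q₃ q₄) *
  (2 * sarea q₁ q₂ q₃ - sarea q₁ q₂ q₄ + sarea q₁ q₃ q₄)

lemma sarea_sw12 (x y z : Fin 2 → ℝ) : sarea y x z = -sarea x y z := by
  unfold sarea; ring

lemma sarea_sw13 (x y z : Fin 2 → ℝ) : sarea z y x = -sarea x y z := by
  unfold sarea; ring

lemma sarea_sw23 (x y z : Fin 2 → ℝ) : sarea x z y = -sarea x y z := by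
  unfold sarea; ring

lemma sarea_rel (a b c d : Fin 2 → ℝ) :
    sarea b c d = sarea a b c - sarea a b d + sarea a c d := by
  unfold sarea; ring

lemma Ifun_ab (a b c d : Fin 2 → ℝ) : Ifun b a c d = Ifun a b c d := by
  unfold Ifun
  rw [sarea_sw12 a b d, sarea_rel a b c d, sarea_sw12 a b c]; ring

lemma Ifun_ac (a b c d : Fin 2 → ℝ) : Ifun c b a d = Ifun a b c d := by
  unfold Ifun
  rw [sarea_sw13 a b c, sarea_sw12 b c d, sarea_rel a b c d, sarea_sw12 a c d]; ring

lemma Ifun_ad (a b c d : Fin 2 → ℝ) : Ifun d b c a = Ifun a b c d := by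
  unfold Ifun
  rw [sarea_sw13 c b d, sarea_sw12 b c d, sarea_rel a b c d,
      sarea_sw13 a b d, sarea_sw13 a c d]; ring

lemma Ifun_bc (a b c d : Fin 2 → ℝ) : Ifun a c b d = Ifun a b c d := by
  unfold Ifun
  rw [sarea_sw23 a b c]; ring

lemma Ifun_bd (a b c d : Fin 2 → ℝ) : Ifun a d c b = Ifun a b c d := by
  unfold Ifun
  rw [sarea_sw23 a d c, sarea_sw23 a c d, sarea_sw23 a d b, sarea_sw23 a b d,
      sarea_sw23 a c b, sarea_sw23 a b c]; ring

lemma Ifun_cd (a b c d : Fin 2 → ℝ) : Ifun a b d c = Ifun a b c d := by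
  unfold Ifun
  rw [sarea_sw23 a d c, sarea_sw23 a c d]; ring

lemma Ifun_swap (x y : Fin 4) (q : Fin 4 → (Fin 2 → ℝ)) :
    Ifun (q (Equiv.swap x y 0)) (q (Equiv.swap x y 1)) (q (Equiv.swap x y 2))
      (q (Equiv.swap x y 3)) = Ifun (q 0) (q 1) (q 2) (q 3) := by
  fin_cases x <;> fin_cases y <;>
    simp only [Equiv.swap_apply_def, Fin.isValue, show ((0:Fin 4) = 0) = True by simp,
      show ((1:Fin 4) = 1) = True by simp] <;>
    norm_num <;>
    first
      | rfl
      | exact Ifun_ab _ _ _ _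
      | exact Ifun_ac _ _ _ _
      | exact Ifun_ad _ _ _ _
      | exact Ifun_bc _ _ _ _
      | exact Ifun_bd _ _ _ _
      | exact Ifun_cd _ _ _ _

theorem stmt_15 (q : Fin 4 → (Fin 2 → ℝ)) (π : Equiv.Perm (Fin 4)) :
    Ifun (q (π 0)) (q (π 1)) (q (π 2)) (q (π 3)) = Ifun (q 0) (q 1) (q 2) (q 3) := by
  have H : ∀ π : Equiv.Perm (Fin 4), ∀ q : Fin 4 → (Fin 2 → ℝ),
      Ifun (q (π 0)) (q (π 1)) (q (π 2)) (q (π 3)) = Ifun (q 0) (q 1) (q 2) (q 3) := by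
    intro π
    refine Equiv.Perm.swap_induction_on π (fun q => rfl) ?_
    intro f x y _ ih q
    simp only [Equiv.Perm.mul_apply]
    calc Ifun (q (Equiv.swap x y (f 0))) (q (Equiv.swap x y (f 1)))
          (q (Equiv.swap x y (f 2))) (q (Equiv.swap x y (f 3)))
        = Ifun ((q ∘ Equiv.swap x y) (f 0)) ((q ∘ Equiv.swap x y) (f 1))
          ((q ∘ Equiv.swap x y) (f 2)) ((q ∘ Equiv.swap x y) (f 3)) := rfl
      _ = Ifun ((q ∘ Equiv.swap x y) 0) ((q ∘ Equiv.swap x y) 1)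
          ((q ∘ Equiv.swap x y) 2) ((q ∘ Equiv.swap x y) 3) := ih _
      _ = Ifun (q 0) (q 1) (q 2) (q 3) := Ifun_swap x y q
  exact H π q
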